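/- arXiv:1711.08857 — 2 statements merged into one kernel-verified Lean document; each statement's English description precedes it below -/
import Mathlib

section
/- The critical values satisfy p_1 = 1 and p_2 = p_3 = 1/2. -/
open Finset

/-- Probability weight of a single path of length `N`. -/
noncomputable def pathProb (p : ℝ) (N : ℕ) (x : Fin N → Bool) : ℝ :=
  p ^ (Finset.univ.filter (fun i => x i = true)).card *
    (1 - p) ^ (N - (Finset.univ.filter (fun i => x i = true)).card)

open Classical in
/-- Probability of an event `E` for the `N`-step Bernoulli walk. -/
noncomputable def walkProb (p : ℝ) (N : ℕ) (E : Set (Fin N → Bool)) : ℝ :=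
  ∑ x : Fin N → Bool, if x ∈ E then pathProb p N x else 0

/-- Partial sum `S_j` of the walk given by the path `x`. -/
def walkS (N : ℕ) (x : Fin N → Bool) (j : ℕ) : ℤ :=
  ∑ i ∈ Finset.univ.filter (fun i : Fin N => (i : ℕ) < j), (if x i then (1 : ℤ) else -1)

/-- Running maximum `M_N = max_{0 ≤ j ≤ N} S_j`. -/
def walkM (N : ℕ) (x : Fin N → Bool) : ℤ :=
  (Finset.range (N + 1)).sup' Finset.nonempty_range_add_one (fun j => walkS N x j)

/-- `U_n(p) = P(M_n ≤ 1)`. -/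
noncomputable def U (n : ℕ) (p : ℝ) : ℝ :=
  walkProb p n {x | walkM n x ≤ 1}

/-- Value function `π_p(n, j)`, defined by backward induction. -/
noncomputable def piVal (p : ℝ) : ℕ → ℕ → ℝ
  | 0, 0 => 1
  | 0, 1 => 1
  | 0, _ + 2 => 0
  | n + 1, 0 => p * piVal p n 0 + (1 - p) * piVal p n 1
  | n + 1, 1 => max (U (n + 1) p) (p * piVal p n 0 + (1 - p) * piVal p n 2)
  | n + 1, j + 2 => p * piVal p n (j + 1) + (1 - p) * piVal p n (j + 3)

/-- `W_n(p) = p·π_p(n-1,0) + q·π_p(n-1,2)` (for `n ≥ 1`). -/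
noncomputable def W (n : ℕ) (p : ℝ) : ℝ :=
  p * piVal p (n - 1) 0 + (1 - p) * piVal p (n - 1) 2

/-- Critical value `p_n = sup {p ∈ (0,1) : U_n(p) ≥ W_n(p)}`. -/
noncomputable def pc (n : ℕ) : ℝ :=
  sSup {p : ℝ | p ∈ Set.Ioo (0 : ℝ) 1 ∧ U n p ≥ W n p}

/-! For `n ≤ 3` both sides are explicit polynomials in `p`. A walk of length at most three
exceeds level `1` only if it starts with two up-steps, so `U_1 = 1` and `U_2 = U_3 = 1 - p²`;
unrolling the recursion, with `π_p(1,1) = max(1, p) = 1`, gives `W_1 = p` and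
`W_2 = W_3 = 2p - p²`. Hence `U_n ≥ W_n` holds on all of `(0,1)` for `n = 1` and exactly on
`(0, 1/2]` for `n = 2, 3`. -/

lemma Fintype.sum_fin_succ_pi {α M : Type*} [Fintype α] [AddCommMonoid M] {n : ℕ}
    (f : (Fin (n + 1) → α) → M) : ∑ x, f x = ∑ a, ∑ y, f (Fin.cons a y) := by
  rw [← (Fin.consEquiv fun _ => α).sum_comp, Fintype.sum_prod_type]
  rfl

lemma pathProb_zero (p : ℝ) (x : Fin 0 → Bool) : pathProb p 0 x = 1 := by
  simp [pathProb]

lemma pathProb_cons (p : ℝ) {n : ℕ} (b : Bool) (y : Fin n → Bool) :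
    pathProb p (n + 1) (Fin.cons b y) = (if b then p else 1 - p) * pathProb p n y := by
  have hcard : #{i | (Fin.cons b y : Fin (n + 1) → Bool) i = true} =
      (if b then 1 else 0) + #{i | y i = true} := by
    simp only [card_filter, Fin.sum_univ_succ, Fin.cons_zero, Fin.cons_succ]
  have hle : #{i | y i = true} ≤ n := card_le_univ _ |>.trans_eq (Fintype.card_fin n)
  cases b
  · simp [pathProb, hcard, Nat.succ_sub hle, pow_succ]; ring
  · simp [pathProb, hcard, pow_succ, add_comm 1]; ring

lemma U_one (p : ℝ) : U 1 p = 1 := by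
  simp only [U, walkProb, Fintype.sum_fin_succ_pi, Fintype.sum_bool,
    Fintype.sum_unique, Set.mem_ofPred_eq]
  simp +decide only [ite_true, ite_false, pathProb_cons, pathProb_zero]
  ring

lemma U_two (p : ℝ) : U 2 p = 1 - p ^ 2 := by
  simp only [U, walkProb, Fintype.sum_fin_succ_pi, Fintype.sum_bool,
    Fintype.sum_unique, Set.mem_ofPred_eq]
  simp +decide only [ite_true, ite_false, pathProb_cons, pathProb_zero]
  ring

lemma U_three (p : ℝ) : U 3 p = 1 - p ^ 2 := by
  simp only [U, walkProb, Fintype.sum_fin_succ_pi, Fintype.sum_bool,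
    Fintype.sum_unique, Set.mem_ofPred_eq]
  simp +decide only [ite_true, ite_false, pathProb_cons, pathProb_zero]
  ring

lemma W_one (p : ℝ) : W 1 p = p := by
  simp [W, piVal]

lemma W_two (p : ℝ) : W 2 p = 2 * p - p ^ 2 := by
  simp [W, piVal]; ring

lemma W_three {p : ℝ} (hp : p ≤ 1) : W 3 p = 2 * p - p ^ 2 := by
  simp [W, piVal, U_one, hp]; ring

lemma pc_eq_of_forall_le_iff {n : ℕ} {c : ℝ} (hc₀ : 0 < c) (hc₁ : c ≤ 1)
    (h : ∀ p ∈ Set.Ioo (0 : ℝ) 1, W n p ≤ U n p ↔ p ≤ c) : pc n = c := by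
  have hset : {p : ℝ | p ∈ Set.Ioo (0 : ℝ) 1 ∧ U n p ≥ W n p} = Set.Ioo 0 1 ∩ Set.Iic c := by
    ext p
    exact and_congr_right (h p)
  rw [pc, hset]
  refine csSup_eq_of_forall_le_of_forall_lt_exists_gt ?_ (fun p hp => hp.2) fun w hw => ?_
  · exact ⟨c / 2, ⟨by linarith, by linarith⟩, show c / 2 ≤ c by linarith⟩
  · refine ⟨(max w 0 + c) / 2, ⟨⟨?_, ?_⟩, show _ ≤ c from ?_⟩, ?_⟩ <;>
      cases max_cases w 0 <;> linarith

/-- `p_1 = 1` and `p_2 = p_3 = 1/2`. -/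
theorem pc_one_two_three : pc 1 = 1 ∧ pc 2 = 1 / 2 ∧ pc 3 = 1 / 2 := by
  refine ⟨pc_eq_of_forall_le_iff one_pos le_rfl fun p hp => ?_,
    pc_eq_of_forall_le_iff (by norm_num) (by norm_num) fun p _ => ?_,
    pc_eq_of_forall_le_iff (by norm_num) (by norm_num) fun p hp => ?_⟩
  · simp [U_one, W_one, hp.2.le]
  · rw [U_two, W_two]; constructor <;> intro <;> linarith
  · rw [U_three, W_three hp.2.le]; constructor <;> intro <;> linarith
end

section
/- For all integers n ≥ 1 and 0 ≤ l ≤ k ≤ n with n ≡ l (mod 2), the probability that the n-step walk has running maximum exactly k and endpoint l is P(M_n = k, S_n = l) = a_{n,k,l} · p^{(n+l)/2} · q^{(n−l)/2}, where a_{n,k,l} := C(n, (n+2k−l)/2) − C(n, (n+2k+2−l)/2). -/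
open Finset

/-!
Every path ending at `l` has weight `p ^ ((n + l) / 2) * q ^ ((n - l) / 2)`, so it remains to count
`#{M_n = k, S_n = l} = #{M_n ≥ k, S_n = l} - #{M_n ≥ k + 1, S_n = l}`. By the reflection principle,
flipping every step after the first visit to level `k ≥ l` is a bijection from `{M_n ≥ k, S_n = l}`
onto `{S_n = 2k - l}`, which has `C(n, (n + 2k - l) / 2)` elements.
-/

section Walk

variable {n : ℕ}

lemma walkS_zero (x : Fin n → Bool) : walkS n x 0 = 0 := by
  simp [walkS]

lemma walkS_succ (x : Fin n → Bool) (j : ℕ) :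
    walkS n x (j + 1) =
      walkS n x j + if h : j < n then (if x ⟨j, h⟩ then 1 else -1) else 0 := by
  unfold walkS
  by_cases h : j < n
  · rw [dif_pos h, show univ.filter (fun i : Fin n => (i : ℕ) < j + 1) =
        insert ⟨j, h⟩ (univ.filter fun i : Fin n => (i : ℕ) < j) by
      ext i; simp only [mem_filter, mem_univ, true_and, mem_insert, Fin.ext_iff]; omega,
      sum_insert (by simp), add_comm]
  · rw [dif_neg h, add_zero]
    congr 1
    ext i
    simp only [mem_filter, mem_univ, true_and]
    omega

lemma walkS_succ_le (x : Fin n → Bool) (j : ℕ) : walkS n x (j + 1) ≤ walkS n x j + 1 := by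
  rw [walkS_succ]
  split_ifs <;> omega

lemma walkS_le_walkM (x : Fin n → Bool) {j : ℕ} (hj : j ≤ n) : walkS n x j ≤ walkM n x :=
  le_sup' (fun j => walkS n x j) (mem_range.mpr (Nat.lt_succ_of_le hj))

lemma walkS_self (x : Fin n → Bool) :
    walkS n x n = 2 * (univ.filter fun i => x i = true).card - n := by
  have hsign : ∀ i, (if x i then (1 : ℤ) else -1) = 2 * (if x i = true then 1 else 0) - 1 := by
    intro i; cases x i <;> rfl
  simp only [walkS, Fin.is_lt, filter_true, hsign, sum_sub_distrib, ← mul_sum, sum_boole,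
    sum_const, card_univ, Fintype.card_fin, nsmul_eq_mul, mul_one]

lemma exists_eq_of_succ_le_add_one {f : ℕ → ℤ} (hf : ∀ j, f (j + 1) ≤ f j + 1) {k : ℤ}
    (h0 : f 0 ≤ k) {J : ℕ} (hJ : k ≤ f J) : ∃ j ≤ J, f j = k := by
  induction J with
  | zero => exact ⟨0, le_rfl, le_antisymm h0 hJ⟩
  | succ J ih =>
    by_cases hk : k ≤ f J
    · obtain ⟨j, hj, hjk⟩ := ih hk
      exact ⟨j, hj.trans J.le_succ, hjk⟩
    · exact ⟨J + 1, le_rfl, by linarith [hf J]⟩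

lemma exists_walkS_eq_of_le_walkM (x : Fin n → Bool) {k : ℤ} (hk : 0 ≤ k)
    (hkM : k ≤ walkM n x) : ∃ j ≤ n, walkS n x j = k := by
  obtain ⟨J, hJ, hJM⟩ := exists_mem_eq_sup' nonempty_range_add_one fun j => walkS n x j
  obtain ⟨j, hjJ, hj⟩ := exists_eq_of_succ_le_add_one (walkS_succ_le x)
    (by rwa [walkS_zero]) (hJM ▸ hkM : k ≤ walkS n x J)
  exact ⟨j, hjJ.trans (Nat.lt_succ_iff.mp (mem_range.mp hJ)), hj⟩

lemma pathProb_eq_of_walkS_self_eq (p : ℝ) {x : Fin n → Bool} {u : ℕ}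
    (hx : walkS n x n = 2 * u - n) :
    pathProb p n x = p ^ u * (1 - p) ^ (n - u) := by
  have hu : (univ.filter fun i => x i = true).card = u := by
    rw [walkS_self] at hx; omega
  rw [pathProb, hu]

open Classical in
lemma walkProb_eq_card_mul (p : ℝ) {E : Set (Fin n → Bool)} {u : ℕ}
    (hE : ∀ x ∈ E, walkS n x n = 2 * u - n) :
    walkProb p n E = (univ.filter (· ∈ E)).card * (p ^ u * (1 - p) ^ (n - u)) := by
  rw [walkProb, ← sum_filter, ← nsmul_eq_mul, ← sum_const]
  exact sum_congr rfl fun x hx => pathProb_eq_of_walkS_self_eq p (hE x (mem_filter.mp hx).2)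

lemma card_filter_card_trues_eq_choose (u : ℕ) :
    (univ.filter fun x : Fin n → Bool => (univ.filter fun i => x i = true).card = u).card =
      n.choose u := by
  classical
  refine (card_nbij' (t := powersetCard u univ) (fun x => univ.filter fun i => x i = true)
    (fun s i => decide (i ∈ s)) ?_ ?_ ?_ ?_).trans (by simp)
  · intro x hx
    simp_all [mem_powersetCard]
  · intro s hs
    simp_all [mem_powersetCard]
  · intro x _
    funext i
    simp
  · intro s _
    ext i
    simp

lemma card_filter_walkS_self_eq {u : ℕ} {m : ℤ} (hm : m = 2 * u - n) :
    (univ.filter fun x : Fin n → Bool => walkS n x n = m).card = n.choose u := by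
  rw [← card_filter_card_trues_eq_choose u]
  congr 1
  ext x
  simp only [mem_filter, mem_univ, true_and, walkS_self]
  omega

def flipFrom (τ : ℕ) (x : Fin n → Bool) : Fin n → Bool :=
  fun i => if (i : ℕ) < τ then x i else !x i

lemma flipFrom_involutive (τ : ℕ) : Function.Involutive (flipFrom (n := n) τ) := by
  intro x
  funext i
  unfold flipFrom
  split_ifs <;> simp

lemma walkS_flipFrom (x : Fin n → Bool) (τ j : ℕ) :
    walkS n (flipFrom τ x) j = if j ≤ τ then walkS n x j else 2 * walkS n x τ - walkS n x j := by
  induction j with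
  | zero => simp [walkS_zero]
  | succ j ih =>
    rw [walkS_succ, walkS_succ x, ih]
    rcases lt_trichotomy j τ with hjτ | rfl | hτj <;>
      split_ifs <;> simp_all [flipFrom] <;> omega

lemma exists_walkS_eq_or_le (k : ℤ) (x : Fin n → Bool) : ∃ j, walkS n x j = k ∨ n ≤ j :=
  ⟨n, Or.inr le_rfl⟩

/-- The first time the walk is at level `k`, or `n` if it never is: with this cap, `reflectAt k`
is the identity on paths that never reach `k`. -/
def firstHit (k : ℤ) (x : Fin n → Bool) : ℕ :=
  Nat.find (exists_walkS_eq_or_le k x)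

lemma firstHit_le (k : ℤ) (x : Fin n → Bool) : firstHit k x ≤ n :=
  Nat.find_min' _ (Or.inr le_rfl)

lemma walkS_firstHit {k : ℤ} {x : Fin n → Bool} (h : ∃ j ≤ n, walkS n x j = k) :
    walkS n x (firstHit k x) = k := by
  obtain ⟨j, hjn, hj⟩ := h
  have hτj : firstHit k x ≤ j := Nat.find_min' _ (Or.inl hj)
  have hspec : walkS n x (firstHit k x) = k ∨ n ≤ firstHit k x :=
    Nat.find_spec (exists_walkS_eq_or_le k x)
  rcases hspec with hτ | hτ
  · exact hτ
  · rwa [show firstHit k x = j by omega]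

lemma firstHit_flipFrom_firstHit (k : ℤ) (x : Fin n → Bool) :
    firstHit k (flipFrom (firstHit k x) x) = firstHit k x := by
  have hagree : ∀ j ≤ firstHit k x, walkS n (flipFrom (firstHit k x) x) j = walkS n x j :=
    fun j hj => by rw [walkS_flipFrom, if_pos hj]
  have hx := (Nat.find_eq_iff (exists_walkS_eq_or_le k x)).mp rfl
  rw [firstHit, Nat.find_eq_iff, hagree _ le_rfl]
  exact ⟨hx.1, fun j hj => by rw [hagree j hj.le]; exact hx.2 j hj⟩

def reflectAt (k : ℤ) (x : Fin n → Bool) : Fin n → Bool :=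
  flipFrom (firstHit k x) x

lemma reflectAt_involutive (k : ℤ) : Function.Involutive (reflectAt (n := n) k) := by
  intro x
  rw [reflectAt, reflectAt, firstHit_flipFrom_firstHit, flipFrom_involutive]

lemma walkS_reflectAt_self {k : ℤ} {x : Fin n → Bool} (h : ∃ j ≤ n, walkS n x j = k) :
    walkS n (reflectAt k x) n = 2 * k - walkS n x n := by
  have hτ := walkS_firstHit h
  rw [reflectAt, walkS_flipFrom]
  split_ifs with hn
  · rw [show firstHit k x = n from le_antisymm (firstHit_le k x) hn] at hτ
    omega
  · rw [hτ]

lemma le_walkM_reflectAt {k : ℤ} {x : Fin n → Bool} (h : ∃ j ≤ n, walkS n x j = k) :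
    k ≤ walkM n (reflectAt k x) := by
  have hτ : walkS n (reflectAt k x) (firstHit k x) = k := by
    rw [reflectAt, walkS_flipFrom, if_pos le_rfl, walkS_firstHit h]
  exact hτ.ge.trans (walkS_le_walkM _ (firstHit_le k x))

theorem card_le_walkM_and_walkS_self_eq {k l : ℤ} (hk : 0 ≤ k) (hlk : l ≤ k) :
    (univ.filter fun x : Fin n → Bool => k ≤ walkM n x ∧ walkS n x n = l).card =
      (univ.filter fun x : Fin n → Bool => walkS n x n = 2 * k - l).card := by
  refine card_nbij' (reflectAt k) (reflectAt k) ?_ ?_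
    (fun x _ => reflectAt_involutive k x) (fun x _ => reflectAt_involutive k x)
  · intro x hx
    simp only [mem_coe, mem_filter, mem_univ, true_and] at hx ⊢
    rw [walkS_reflectAt_self (exists_walkS_eq_of_le_walkM x hk hx.1), hx.2]
  · intro y hy
    simp only [mem_coe, mem_filter, mem_univ, true_and] at hy ⊢
    have hkM : k ≤ walkM n y := by linarith [walkS_le_walkM y le_rfl]
    have hhit := exists_walkS_eq_of_le_walkM y hk hkM
    exact ⟨le_walkM_reflectAt hhit, by rw [walkS_reflectAt_self hhit, hy]; ring⟩

lemma card_walkM_eq_and_walkS_self_eq_add (k l : ℤ) :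
    (univ.filter fun x : Fin n → Bool => walkM n x = k ∧ walkS n x n = l).card +
      (univ.filter fun x : Fin n → Bool => k + 1 ≤ walkM n x ∧ walkS n x n = l).card =
    (univ.filter fun x : Fin n → Bool => k ≤ walkM n x ∧ walkS n x n = l).card := by
  rw [← card_union_of_disjoint (disjoint_filter.mpr fun x _ h1 h2 => by omega)]
  congr 1
  ext x
  simp only [mem_union, mem_filter, mem_univ, true_and]
  omega

end Walk

theorem max_and_endpoint_prob_general (p : ℝ) (n k l : ℕ) (hlk : l ≤ k) (hpar : n % 2 = l % 2) :
    walkProb p n {x | walkM n x = (k : ℤ) ∧ walkS n x n = (l : ℤ)} =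
      ((n.choose ((n + 2 * k - l) / 2) : ℝ) - (n.choose ((n + 2 * k + 2 - l) / 2) : ℝ)) *
        p ^ ((n + l) / 2) * (1 - p) ^ ((n - l) / 2) := by
  classical
  have hcount := card_walkM_eq_and_walkS_self_eq_add (n := n) k l
  rw [card_le_walkM_and_walkS_self_eq (k := k) (by positivity) (by omega),
    card_le_walkM_and_walkS_self_eq (k := k + 1) (by omega) (by omega),
    card_filter_walkS_self_eq (m := 2 * k - l) (u := (n + 2 * k - l) / 2) (by omega),
    card_filter_walkS_self_eq (m := 2 * (k + 1) - l) (u := (n + 2 * k + 2 - l) / 2) (by omega)]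
    at hcount
  rw [walkProb_eq_card_mul p (u := (n + l) / 2) fun x hx => hx.2.trans (by omega),
    show n - (n + l) / 2 = (n - l) / 2 by omega, ← hcount]
  simp only [Set.mem_ofPred_eq, Nat.cast_add, add_sub_cancel_right]
  ring

/-- `P(M_n = k, S_n = l) = a_{n,k,l} p^{(n+l)/2} q^{(n−l)/2}` for `0 ≤ l ≤ k ≤ n`
with `n ≡ l (mod 2)`, where `a_{n,k,l} = C(n,(n+2k−l)/2) − C(n,(n+2k+2−l)/2)`. -/
theorem max_and_endpoint_prob (p : ℝ) (hp : p ∈ Set.Ioo (0 : ℝ) 1)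
    (n k l : ℕ) (hn : 1 ≤ n) (hlk : l ≤ k) (hkn : k ≤ n) (hpar : n % 2 = l % 2) :
    walkProb p n {x | walkM n x = (k : ℤ) ∧ walkS n x n = (l : ℤ)} =
      ((n.choose ((n + 2 * k - l) / 2) : ℝ) - (n.choose ((n + 2 * k + 2 - l) / 2) : ℝ)) *
        p ^ ((n + l) / 2) * (1 - p) ^ ((n - l) / 2) :=
  max_and_endpoint_prob_general p n k l hlk hpar
end
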